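/- arXiv:1305.6018 — 2 statements merged into one kernel-verified Lean document; each statement's English description precedes it below -/
import Mathlib

section
/- For every positive integer k, Σ_{j=1}^{k} τ(gcd(j,k)) · c_k(j) = φ(k), where τ(n) is the number of divisors of n and φ is Euler's totient function. -/
/-!
Writing `τ (gcd j k) = ∑_{d ∣ k, d ∣ j} 1` and expanding `c_k(j)`, the sum becomes
`∑_{m ⊥ k} ∑_{d ∣ k} ∑_{j ≤ k, d ∣ j} e(mj/k)`, where `e(x) = exp(2πix)`. Substituting
`j = d t` turns the innermost sum into the full sum of the powers of the `(k/d)`-th root of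
unity `e(m/(k/d))`, which is `k/d` if `k/d ∣ m` and `0` otherwise. Since `m` is coprime to `k`,
only `d = k` survives, contributing `1` for each of the `φ k` values of `m`. The same
computation gives `∑_j (∑_{d ∣ gcd j k} g d) c_k(j) = φ k * g k` for an arbitrary weight `g`.
-/

open Finset ArithmeticFunction

/-- The Ramanujan sum `c_k(j) = ∑_{1 ≤ m ≤ k, gcd(m,k)=1} exp(2πimj/k)`. -/
noncomputable def ramanujanSum (k : ℕ) (j : ℤ) : ℂ :=
  ∑ m ∈ (Finset.Icc 1 k).filter (fun m => Nat.gcd m k = 1),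
    Complex.exp (2 * (Real.pi : ℂ) * Complex.I * (m : ℂ) * (j : ℂ) / (k : ℂ))

open scoped Nat

theorem sum_Icc_pow_of_pow_eq_one {K : Type*} [DivisionRing K] [DecidableEq K] {z : K}
    {n : ℕ} (hz : z ^ n = 1) : ∑ t ∈ Icc 1 n, z ^ t = if z = 1 then (n : K) else 0 := by
  rw [← Ico_add_one_right_eq_Icc, sum_Ico_eq_sum_range, Nat.add_sub_cancel]
  simp_rw [pow_add, pow_one, ← mul_sum]
  split_ifs with h1
  · simp [h1]
  · rw [geom_sum_eq h1, hz, sub_self, zero_div, mul_zero]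

theorem sum_Icc_exp_two_pi_I_mul_div {n : ℕ} (hn : 0 < n) (m : ℕ) :
    ∑ t ∈ Icc 1 n, Complex.exp (2 * Real.pi * Complex.I * m * t / n) =
      if n ∣ m then (n : ℂ) else 0 := by
  have hζ := Complex.isPrimitiveRoot_exp n hn.ne'
  set ζ := Complex.exp (2 * Real.pi * Complex.I / n)
  have hpow (t : ℕ) : Complex.exp (2 * Real.pi * Complex.I * m * t / n) = (ζ ^ m) ^ t := by
    rw [← pow_mul, ← Complex.exp_nat_mul]
    push_cast
    ring_nf
  simp_rw [hpow]
  rw [sum_Icc_pow_of_pow_eq_one (by rw [← pow_mul, mul_comm, pow_mul, hζ.pow_eq_one, one_pow])]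
  simp only [hζ.pow_eq_one_iff_dvd]

theorem sum_Icc_filter_dvd {M : Type*} [AddCommMonoid M] (f : ℕ → M) {d : ℕ} (hd : 0 < d)
    (k : ℕ) : ∑ j ∈ Icc 1 k with d ∣ j, f j = ∑ t ∈ Icc 1 (k / d), f (d * t) := by
  rw [← sum_image fun _ _ _ _ h => Nat.eq_of_mul_eq_mul_left hd h]
  congr 1
  ext j
  simp only [mem_filter, mem_Icc, mem_image]
  constructor
  · rintro ⟨⟨hj1, hjk⟩, t, rfl⟩
    exact ⟨t, ⟨Nat.pos_of_mul_pos_left hj1, (Nat.le_div_iff_mul_le hd).2 (by linarith)⟩, rfl⟩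
  · rintro ⟨t, ⟨ht1, htk⟩, rfl⟩
    refine ⟨⟨Nat.mul_pos hd ht1, ?_⟩, dvd_mul_right d t⟩
    have := (Nat.le_div_iff_mul_le hd).1 htk
    linarith

theorem sum_Icc_filter_dvd_exp_two_pi_I_mul_div {d e : ℕ} (hd : 0 < d) (he : 0 < e) (m : ℕ) :
    ∑ j ∈ Icc 1 (d * e) with d ∣ j,
        Complex.exp (2 * Real.pi * Complex.I * m * j / (d * e : ℕ)) =
      if e ∣ m then (e : ℂ) else 0 := by
  rw [sum_Icc_filter_dvd _ hd, Nat.mul_div_cancel_left e hd, ← sum_Icc_exp_two_pi_I_mul_div he]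
  refine sum_congr rfl fun t _ => congrArg Complex.exp ?_
  have : (d : ℂ) ≠ 0 := by exact_mod_cast hd.ne'
  push_cast
  field_simp

theorem sum_Icc_divisorSum_gcd_mul_exp_two_pi_I_mul_div {k m : ℕ} (hk : 0 < k)
    (hm : m.Coprime k) (g : ℕ → ℂ) :
    ∑ j ∈ Icc 1 k, (∑ d ∈ (j.gcd k).divisors, g d) *
        Complex.exp (2 * Real.pi * Complex.I * m * j / k) = g k := by
  set χ : ℕ → ℂ := fun j => Complex.exp (2 * Real.pi * Complex.I * m * j / k)
  have hgcd (j : ℕ) : (j.gcd k).divisors = {d ∈ k.divisors | d ∣ j} := by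
    rw [← Nat.divisors_filter_dvd_of_dvd hk.ne' (Nat.gcd_dvd_right j k)]
    ext d
    simp +contextual [Nat.dvd_gcd_iff]
  have hχ : ∀ d ∈ k.divisors,
      ∑ j ∈ Icc 1 k with d ∣ j, χ j = if d = k then (1 : ℂ) else 0 := by
    intro d hd
    obtain ⟨e, rfl⟩ := Nat.dvd_of_mem_divisors hd
    have hd0 : 0 < d := Nat.pos_of_mem_divisors hd
    have he_dvd_iff : e ∣ m ↔ e = 1 :=
      ⟨(hm.coprime_dvd_right (dvd_mul_left e d)).symm.eq_one_of_dvd, fun he => he ▸ one_dvd m⟩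
    rw [sum_Icc_filter_dvd_exp_two_pi_I_mul_div hd0 (Nat.pos_of_mul_pos_left hk)]
    simp only [he_dvd_iff, left_eq_mul₀ hd0.ne']
    split_ifs with he
    · rw [he, Nat.cast_one]
    · rfl
  calc ∑ j ∈ Icc 1 k, (∑ d ∈ (j.gcd k).divisors, g d) * χ j
      = ∑ d ∈ k.divisors, g d * ∑ j ∈ Icc 1 k with d ∣ j, χ j := by
        simp_rw [hgcd, sum_filter, sum_mul, mul_sum, ite_mul, zero_mul, mul_ite, mul_zero]
        rw [sum_comm]
    _ = g k := by
        rw [sum_congr rfl fun d hd => congrArg (g d * ·) (hχ d hd)]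
        simp [hk.ne']

theorem card_filter_Icc_gcd_eq_one_eq_totient (k : ℕ) :
    #{m ∈ Icc 1 k | m.gcd k = 1} = φ k := by
  rw [← Nat.filter_coprime_Ico_eq_totient k 1, add_comm, Ico_add_one_right_eq_Icc]
  simp only [Nat.coprime_iff_gcd_eq_one, Nat.gcd_comm]

theorem sum_Icc_divisorSum_gcd_mul_ramanujanSum (k : ℕ) (g : ℕ → ℂ) :
    ∑ j ∈ Icc 1 k, (∑ d ∈ (j.gcd k).divisors, g d) * ramanujanSum k j = φ k * g k := by
  simp_rw [ramanujanSum, mul_sum, Int.cast_natCast]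
  rw [sum_comm]
  have hinner : ∀ m ∈ {m ∈ Icc 1 k | m.gcd k = 1},
      ∑ j ∈ Icc 1 k, (∑ d ∈ (j.gcd k).divisors, g d) *
        Complex.exp (2 * Real.pi * Complex.I * m * j / k) = g k := by
    intro m hm
    rw [mem_filter, mem_Icc] at hm
    exact sum_Icc_divisorSum_gcd_mul_exp_two_pi_I_mul_div (by omega) hm.2 g
  rw [sum_congr rfl hinner, sum_const, card_filter_Icc_gcd_eq_one_eq_totient, nsmul_eq_mul]

theorem tau_gcd_weighted_ramanujan_sum_general (k : ℕ) :
    ∑ j ∈ Finset.Icc 1 k, ((Nat.gcd j k).divisors.card : ℂ) * ramanujanSum k j =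
      (Nat.totient k : ℂ) := by
  simpa using sum_Icc_divisorSum_gcd_mul_ramanujanSum k fun _ => 1

theorem tau_gcd_weighted_ramanujan_sum (k : ℕ) (hk : 0 < k) :
    ∑ j ∈ Finset.Icc 1 k, ((Nat.gcd j k).divisors.card : ℂ) * ramanujanSum k j =
      (Nat.totient k : ℂ) :=
  tau_gcd_weighted_ramanujan_sum_general k
end

section
/- Let n be a positive integer, let k_1, …, k_n be positive integers and let k := lcm(k_1, …, k_n). Then E(k_1, …, k_n) := (1/k) · Σ_{j=1}^{k} c_{k_1}(j) ⋯ c_{k_n}(j) = Σ_{d_1 | k_1, …, d_n | k_n} d_1 μ(k_1/d_1) ⋯ d_n μ(k_n/d_n) / lcm(d_1, …, d_n), where μ is the Möbius function and the sum ranges over all n-tuples (d_1, …, d_n) with d_i dividing k_i. -/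
/-!
Möbius inversion over `gcd(m, k) = 1` turns the Ramanujan sum into complete sums of roots of
unity, giving `c_k(j) = ∑_{e ∣ k} e μ(k/e) [e ∣ j]`. Expanding the product of these over all
divisor tuples `d`, the term of `d` is supported on the multiples of `lcm d`, and `[1, K]`
contains exactly `K / lcm d` of them.
-/

open Finset ArithmeticFunction

open Complex
open scoped Real
open scoped ArithmeticFunction.Moebius

lemma sum_Icc_cexp_eq_ite {k : ℕ} (hk : k ≠ 0) (j : ℤ) :
    ∑ m ∈ Icc 1 k, cexp (2 * π * I * m * j / k) =
      if (k : ℤ) ∣ j then (k : ℂ) else 0 := by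
  have hζ := isPrimitiveRoot_exp k hk
  set w := cexp (2 * π * I / k) ^ j
  have hpow (m : ℕ) : cexp (2 * π * I * m * j / k) = w ^ m := by
    simp only [w, ← exp_int_mul, ← exp_nat_mul]
    ring_nf
  have hwk : w ^ k = 1 := by
    rw [← zpow_natCast, ← zpow_mul, hζ.zpow_eq_one_iff_dvd]
    exact dvd_mul_left _ _
  simp_rw [hpow]
  split_ifs with hkj
  · simp [w, (hζ.zpow_eq_one_iff_dvd j).mpr hkj]
  · have hw : w ≠ 1 := mt (hζ.zpow_eq_one_iff_dvd j).mp hkj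
    rw [← Ico_add_one_right_eq_Icc, geom_sum_Ico hw (by omega), pow_succ, hwk, one_mul, pow_one,
      sub_self, zero_div]

lemma sum_Icc_filter_dvd_cexp {d k : ℕ} (hdk : d ∣ k) (hk : k ≠ 0) (j : ℤ) :
    ∑ m ∈ Icc 1 k with d ∣ m, cexp (2 * π * I * m * j / k) =
      ∑ t ∈ Icc 1 (k / d), cexp (2 * π * I * t * j / (k / d : ℕ)) := by
  obtain ⟨e, rfl⟩ := hdk
  have hd : 0 < d := Nat.pos_of_ne_zero (left_ne_zero_of_mul hk)
  have hfilter : {m ∈ Icc 1 (d * e) | d ∣ m} = (Icc 1 e).image (d * ·) := by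
    ext m
    simp only [mem_filter, mem_Icc, mem_image]
    constructor
    · rintro ⟨⟨h1, h2⟩, t, rfl⟩
      exact ⟨t, ⟨Nat.pos_of_mul_pos_left h1, Nat.le_of_mul_le_mul_left h2 hd⟩, rfl⟩
    · rintro ⟨t, ⟨h1, h2⟩, rfl⟩
      exact ⟨⟨Nat.mul_pos hd h1, Nat.mul_le_mul_left d h2⟩, dvd_mul_right d t⟩
  rw [hfilter, sum_image fun _ _ _ _ h => Nat.eq_of_mul_eq_mul_left hd h,
    Nat.mul_div_cancel_left e hd]
  refine sum_congr rfl fun t _ => ?_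
  congr 1
  push_cast
  field_simp [hd.ne']

lemma sum_moebius_divisors_filter_dvd {R : Type*} [Ring R] {k : ℕ} (hk : k ≠ 0) (m : ℕ) :
    ∑ d ∈ k.divisors with d ∣ m, (μ d : R) = if m.gcd k = 1 then 1 else 0 := by
  have hdiv : {d ∈ k.divisors | d ∣ m} = (m.gcd k).divisors := by
    ext d
    simp [Nat.dvd_gcd_iff, hk, and_comm]
  have h := congrArg (· (m.gcd k)) (coe_moebius_mul_coe_zeta (R := R))
  simp only [coe_mul_zeta_apply, intCoe_apply, one_apply] at h
  rw [hdiv, h]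

lemma ramanujanSum_eq_sum_divisors (k : ℕ) (j : ℤ) :
    ramanujanSum k j =
      ∑ e ∈ k.divisors, if (e : ℤ) ∣ j then (e : ℂ) * μ (k / e) else 0 := by
  rcases eq_or_ne k 0 with rfl | hk
  · simp [ramanujanSum]
  calc ramanujanSum k j
      = ∑ m ∈ Icc 1 k,
          (∑ d ∈ k.divisors with d ∣ m, (μ d : ℂ)) * cexp (2 * π * I * m * j / k) := by
        simp_rw [sum_moebius_divisors_filter_dvd hk, ite_mul, one_mul, zero_mul, ← sum_filter]
        rfl
    _ = ∑ d ∈ k.divisors,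
          μ d * ∑ m ∈ Icc 1 k with d ∣ m, cexp (2 * π * I * m * j / k) := by
        simp_rw [sum_filter, sum_mul, ite_mul, zero_mul, mul_sum, mul_ite, mul_zero]
        exact sum_comm
    _ = ∑ d ∈ k.divisors,
          μ d * if ((k / d : ℕ) : ℤ) ∣ j then ((k / d : ℕ) : ℂ) else 0 := by
        refine sum_congr rfl fun d hd => ?_
        have hdk := Nat.dvd_of_mem_divisors hd
        have hkd : k / d ≠ 0 := (Nat.div_pos (Nat.le_of_dvd (Nat.pos_of_ne_zero hk) hdk)
          (Nat.pos_of_mem_divisors hd)).ne'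
        rw [sum_Icc_filter_dvd_cexp hdk hk, sum_Icc_cexp_eq_ite hkd]
    _ = _ := by
        rw [← Nat.sum_div_divisors]
        refine sum_congr rfl fun d hd => ?_
        rw [Nat.div_div_self (Nat.dvd_of_mem_divisors hd) hk, mul_ite, mul_zero, mul_comm]

lemma prod_ite_dvd_eq_ite_lcm_dvd {ι M : Type*} [CommMonoidWithZero M] (s : Finset ι)
    (d : ι → ℕ) (a : ι → M) (j : ℤ) :
    ∏ i ∈ s, (if (d i : ℤ) ∣ j then a i else 0) =
      if ((s.lcm d : ℕ) : ℤ) ∣ j then ∏ i ∈ s, a i else 0 := by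
  simp only [prod_ite_zero, Int.natCast_dvd, Finset.lcm_dvd_iff]

lemma prod_ramanujanSum_eq_sum_piFinset {ι : Type*} [Fintype ι] [DecidableEq ι] (k : ι → ℕ)
    (j : ℤ) :
    ∏ i, ramanujanSum (k i) j = ∑ d ∈ Fintype.piFinset (fun i => (k i).divisors),
      if ((univ.lcm d : ℕ) : ℤ) ∣ j then ∏ i, (d i : ℂ) * μ (k i / d i) else 0 := by
  simp_rw [ramanujanSum_eq_sum_divisors, prod_univ_sum, prod_ite_dvd_eq_ite_lcm_dvd]

lemma sum_Icc_ite_dvd {M : Type*} [AddCommMonoid M] (K L : ℕ) (x : M) :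
    ∑ j ∈ Icc 1 K, (if (L : ℤ) ∣ (j : ℤ) then x else 0) = (K / L) • x := by
  rw [← sum_filter, sum_const, ← zero_add 1, Icc_add_one_left_eq_Ioc]
  simp only [Int.natCast_dvd_natCast, Nat.Ioc_filter_dvd_card_eq_div]

theorem orbicyclic_eq_sum_over_divisor_tuples_general (n : ℕ)
    (k : Fin n → ℕ) (K : ℕ) (hK : K = Finset.univ.lcm k) :
    (1 / (K : ℂ)) * ∑ j ∈ Finset.Icc 1 K, ∏ i, ramanujanSum (k i) j =
      ∑ d ∈ Fintype.piFinset (fun i => (k i).divisors),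
        (∏ i, (d i : ℂ) * (moebius (k i / d i) : ℂ)) / ((Finset.univ.lcm d : ℕ) : ℂ) := by
  simp_rw [prod_ramanujanSum_eq_sum_piFinset]
  rw [sum_comm, mul_sum]
  refine sum_congr rfl fun d hd => ?_
  have hdk : ∀ i, d i ∣ k i ∧ k i ≠ 0 := by simpa using hd
  have hK0 : (K : ℂ) ≠ 0 := by
    rw [hK, Nat.cast_ne_zero, Ne, Finset.lcm_eq_zero_iff]
    simp [hdk]
  have hdK : univ.lcm d ∣ K := hK ▸ lcm_mono_fun fun i _ => (hdk i).1
  rw [sum_Icc_ite_dvd, nsmul_eq_mul, Nat.cast_div_charZero hdK]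
  field_simp

theorem orbicyclic_eq_sum_over_divisor_tuples (n : ℕ) (hn : 0 < n)
    (k : Fin n → ℕ) (hk : ∀ i, 0 < k i) (K : ℕ) (hK : K = Finset.univ.lcm k) :
    (1 / (K : ℂ)) * ∑ j ∈ Finset.Icc 1 K, ∏ i, ramanujanSum (k i) j =
      ∑ d ∈ Fintype.piFinset (fun i => (k i).divisors),
        (∏ i, (d i : ℂ) * (moebius (k i / d i) : ℂ)) / ((Finset.univ.lcm d : ℕ) : ℂ) :=
  orbicyclic_eq_sum_over_divisor_tuples_general n k K hK
end
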